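/- arXiv:1701.00771 — 4 statements merged into one kernel-verified Lean document; each statement's English description precedes it below -/
import Mathlib

section
/- Let m ≥ 2 be an integer and ω = exp(2π√−1/m) ∈ ℂ the primitive m-th root of unity. Then ∑_{i=1}^{m−1} ω^i/(1 − ω^i)² = −(m² − 1)/12. -/
/-!
For an `m`-th root of unity `z ≠ 1`, summing by parts twice gives
`(1 - z)² ∑_{k<m} k (m - k) z^k = 2 m z`, so on the nontrivial `m`-th roots of unity `z / (1 - z)²`
is a polynomial of degree `< m` without constant term. Over these roots each `z^k` with `0 < k < m`
sums to `-1`, which leaves `-(1 / 2m) ∑_{k<m} k (m - k) = -(m² - 1) / 12`.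
-/

open Complex Finset

section CommRing

variable {R : Type*} [CommRing R]

theorem one_sub_mul_sum_range_mul_pow (z : R) (n : ℕ) :
    (1 - z) * ∑ k ∈ range n, (k : R) * z ^ k = z * ∑ k ∈ range n, z ^ k - n * z ^ n := by
  induction n with
  | zero => simp
  | succ n ih => rw [sum_range_succ, sum_range_succ, mul_add, ih]; push_cast; ring

theorem one_sub_mul_sum_range_sq_mul_pow (z : R) (n : ℕ) :
    (1 - z) * ∑ k ∈ range n, (k : R) ^ 2 * z ^ k
      = z * (2 * ∑ k ∈ range n, (k : R) * z ^ k + ∑ k ∈ range n, z ^ k) - n ^ 2 * z ^ n := by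
  induction n with
  | zero => simp
  | succ n ih => simp only [sum_range_succ]; rw [mul_add, ih]; push_cast; ring

theorem one_sub_sq_mul_sum_range_mul_sub_mul_pow {z : R} {n : ℕ}
    (hz : ∑ k ∈ range n, z ^ k = 0) :
    (1 - z) ^ 2 * ∑ k ∈ range n, (k : R) * (n - k) * z ^ k = 2 * n * z := by
  have hzn : z ^ n = 1 := by
    rw [← sub_eq_zero, ← neg_sub, ← mul_neg_geom_sum, hz, mul_zero, neg_zero]
  have hA := one_sub_mul_sum_range_mul_pow z n
  have hB := one_sub_mul_sum_range_sq_mul_pow z n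
  rw [hz, hzn] at hA hB
  have hsplit : ∑ k ∈ range n, (k : R) * (n - k) * z ^ k
      = n * ∑ k ∈ range n, (k : R) * z ^ k - ∑ k ∈ range n, (k : R) ^ 2 * z ^ k := by
    rw [mul_sum, ← sum_sub_distrib]; exact sum_congr rfl fun k _ => by ring
  rw [hsplit]
  linear_combination (n * (1 - z) - 2 * z) * hA - (1 - z) * hB

theorem six_mul_sum_range_mul_sub (c : R) (n : ℕ) :
    6 * ∑ k ∈ range n, (k : R) * (c - k) = 3 * c * n * (n - 1) - n * (n - 1) * (2 * n - 1) := by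
  induction n with
  | zero => simp
  | succ n ih => rw [sum_range_succ, mul_add, ih]; push_cast; ring

end CommRing

section IsDomain

variable {R : Type*} [CommRing R] [IsDomain R]

theorem geom_sum_eq_zero_of_pow_eq_one {z : R} {n : ℕ} (hz : z ^ n = 1) (h1 : z ≠ 1) :
    ∑ k ∈ range n, z ^ k = 0 :=
  (mul_eq_zero.1 (by rw [mul_neg_geom_sum, hz, sub_self])).resolve_left (sub_ne_zero.2 h1.symm)

theorem sum_Icc_one_pow_eq_neg_one {z : R} {n : ℕ} (hn : n ≠ 0) (hz : z ^ n = 1) (h1 : z ≠ 1) :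
    ∑ k ∈ Icc 1 (n - 1), z ^ k = -1 := by
  have h := geom_sum_eq_zero_of_pow_eq_one hz h1
  rw [Nat.range_eq_Icc_zero_sub_one n hn, ← insert_Icc_add_one_left_eq_Icc (Nat.zero_le _),
    sum_insert (by simp), pow_zero] at h
  linear_combination h

end IsDomain

/-- For an integer `m ≥ 2` and `ω = exp(2π√−1/m)` the primitive `m`-th root of unity,
`∑_{i=1}^{m−1} ω^i/(1 − ω^i)² = −(m² − 1)/12`. -/
theorem sum_root_div_one_sub_root_sq (m : ℕ) (hm : 2 ≤ m)
    (ω : ℂ) (hω : ω = Complex.exp (2 * Real.pi * Complex.I / m)) :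
    ∑ i ∈ Finset.Icc 1 (m - 1), ω ^ i / (1 - ω ^ i) ^ 2 = -(((m : ℂ) ^ 2 - 1) / 12) := by
  have hprim : IsPrimitiveRoot ω m := hω ▸ Complex.isPrimitiveRoot_exp m (by omega)
  have hm0 : (m : ℂ) ≠ 0 := by norm_cast; omega
  have h2m0 : (2 * m : ℂ) ≠ 0 := mul_ne_zero two_ne_zero hm0
  have hpow (k : ℕ) : (ω ^ k) ^ m = 1 := by rw [pow_right_comm, hprim.pow_eq_one, one_pow]
  calc ∑ i ∈ Icc 1 (m - 1), ω ^ i / (1 - ω ^ i) ^ 2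
      = ∑ i ∈ Icc 1 (m - 1), (∑ k ∈ range m, (k : ℂ) * (m - k) * (ω ^ i) ^ k) / (2 * m) := by
        refine sum_congr rfl fun i hi => ?_
        rw [mem_Icc] at hi
        have hi1 : ω ^ i ≠ 1 := hprim.pow_ne_one_of_pos_of_lt (by omega) (by omega)
        rw [div_eq_div_iff (pow_ne_zero 2 (sub_ne_zero.2 hi1.symm)) h2m0]
        linear_combination -one_sub_sq_mul_sum_range_mul_sub_mul_pow
          (geom_sum_eq_zero_of_pow_eq_one (hpow i) hi1)
    _ = ∑ k ∈ range m, (k : ℂ) * (m - k) / (2 * m) * ∑ i ∈ Icc 1 (m - 1), (ω ^ k) ^ i := by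
        simp only [sum_div, mul_sum]
        rw [sum_comm]
        exact sum_congr rfl fun _ _ => sum_congr rfl fun _ _ => by rw [pow_right_comm]; ring
    _ = ∑ k ∈ range m, -((k : ℂ) * (m - k)) / (2 * m) := by
        refine sum_congr rfl fun k hk => ?_
        rcases eq_or_ne k 0 with rfl | hk0
        · simp
        rw [sum_Icc_one_pow_eq_neg_one (by omega) (hpow k)
          (hprim.pow_ne_one_of_pos_of_lt hk0 (mem_range.1 hk))]
        ring
    _ = -(((m : ℂ) ^ 2 - 1) / 12) := by
        have h := six_mul_sum_range_mul_sub (m : ℂ) m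
        rw [← sum_div, sum_neg_distrib]
        field_simp
        linear_combination -2 * h
end

section
/- Let m ≥ 2 be an integer, ω = exp(2π√−1/m) ∈ ℂ the primitive m-th root of unity, k a nonnegative integer, and let k̄ ∈ {0, 1, …, m−1} be the least nonnegative residue of k modulo m. Then ∑_{i=1}^{m−1} ω^{i(k+1)}/(1 − ω^i)² = −(m² − 1)/12 + k̄(m − k̄)/2. -/
open Complex Finset

lemma aux_sum_mul_geom (ζ : ℂ) (n : ℕ) :
    (1 - ζ) * ∑ j ∈ range n, (j : ℂ) * ζ ^ j
      = (∑ j ∈ range n, ζ ^ j) - 1 - ((n : ℂ) - 1) * ζ ^ n := by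
  induction n with
  | zero => simp
  | succ n ih =>
    rw [sum_range_succ, sum_range_succ]
    push_cast
    linear_combination ih

lemma sumc1 (n : ℕ) : ∑ j ∈ range n, (j : ℂ) = n * (n - 1) / 2 := by
  induction n with
  | zero => simp
  | succ n ih => rw [sum_range_succ]; push_cast; linear_combination ih

lemma sumc3 (x : ℂ) (n : ℕ) :
    ∑ j ∈ range n, (j : ℂ) * (x - j)
      = x * (n * (n - 1) / 2) - n * (n - 1) * (2 * n - 1) / 6 := by
  induction n with
  | zero => simp
  | succ n ih => rw [sum_range_succ]; push_cast; linear_combination ih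

lemma aux_dvd_iff (m K j l r : ℕ) (hK : K < m) (hr : r = m - 1 - K)
    (hj : j < m) (hl : l < m) :
    (m ∣ (K + 1 + j + l) ↔ l = (if j ≤ r then r - j else m + r - j)) := by
  constructor
  · rintro ⟨d, hd⟩
    have hd3 : d < 3 := by
      by_contra h
      have : m * 3 ≤ m * d := Nat.mul_le_mul_left m (by omega)
      omega
    interval_cases d <;> (split <;> omega)
  · rintro rfl
    split
    · exact ⟨1, by omega⟩
    · exact ⟨2, by omega⟩

lemma aux_G (m : ℕ) (hm : 2 ≤ m) (ω : ℂ) (hprim : IsPrimitiveRoot ω m) (n : ℕ) :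
    ∑ i ∈ Icc 1 (m - 1), (ω ^ i) ^ n = (if m ∣ n then (m : ℂ) else 0) - 1 := by
  have hcomm : ∀ i, (ω ^ i) ^ n = (ω ^ n) ^ i := fun i => by
    rw [← pow_mul, ← pow_mul, mul_comm]
  simp only [hcomm]
  have hins : range m = insert 0 (Icc 1 (m - 1)) := by
    ext x; simp only [mem_range, mem_insert, mem_Icc]; omega
  have h0 : (0 : ℕ) ∉ Icc 1 (m - 1) := by simp
  have hcard : #(Icc 1 (m - 1)) = m - 1 := by rw [Nat.card_Icc]; omega
  have hsum : ∑ i ∈ range m, (ω ^ n) ^ i = 1 + ∑ i ∈ Icc 1 (m - 1), (ω ^ n) ^ i := by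
    rw [hins, sum_insert h0]; simp
  by_cases hdvd : m ∣ n
  · rw [if_pos hdvd]
    have h1 : ω ^ n = 1 := (hprim.pow_eq_one_iff_dvd n).2 hdvd
    rw [h1]
    simp only [one_pow, sum_const, hcard, nsmul_eq_mul, mul_one]
    rw [Nat.cast_sub (by omega)]
    simp
  · rw [if_neg hdvd]
    have h1 : ω ^ n ≠ 1 := fun h => hdvd ((hprim.pow_eq_one_iff_dvd n).1 h)
    have h2 : ∑ i ∈ range m, (ω ^ n) ^ i = 0 := by
      rw [geom_sum_eq h1]
      have : (ω ^ n) ^ m = 1 := by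
        rw [← pow_mul, mul_comm, pow_mul, hprim.pow_eq_one, one_pow]
      rw [this]; simp
    rw [h2] at hsum
    linear_combination -hsum

lemma aux_term (m k : ℕ) (hm : 2 ≤ m) (ζ : ℂ) (hζ1 : ζ ^ m = 1) (hζ : ζ ≠ 1) :
    ζ ^ (k + 1) / (1 - ζ) ^ 2
      = (∑ j ∈ range m, ∑ l ∈ range m, (j : ℂ) * (l : ℂ) * ζ ^ (k + 1 + j + l)) / (m : ℂ) ^ 2 := by
  have hm0 : (m : ℂ) ≠ 0 := Nat.cast_ne_zero.2 (by omega)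
  have hne : (1 : ℂ) - ζ ≠ 0 := sub_ne_zero.2 (Ne.symm hζ)
  have hgeom : ∑ j ∈ range m, ζ ^ j = 0 := by
    rw [geom_sum_eq hζ, hζ1]; simp
  have hS : (1 - ζ) * ∑ j ∈ range m, (j : ℂ) * ζ ^ j = -(m : ℂ) := by
    rw [aux_sum_mul_geom, hgeom, hζ1]; ring
  have hexp : ∑ j ∈ range m, ∑ l ∈ range m, (j : ℂ) * (l : ℂ) * ζ ^ (k + 1 + j + l)
      = ζ ^ (k + 1) * ((∑ j ∈ range m, (j : ℂ) * ζ ^ j) * (∑ l ∈ range m, (l : ℂ) * ζ ^ l)) := by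
    rw [sum_mul_sum, mul_sum]
    refine sum_congr rfl fun j _ => ?_
    rw [mul_sum]
    refine sum_congr rfl fun l _ => ?_
    rw [pow_add, pow_add]
    ring
  rw [hexp]
  set S := ∑ j ∈ range m, (j : ℂ) * ζ ^ j
  field_simp
  linear_combination (ζ ^ (k + 1) * ((m : ℂ) - (1 - ζ) * S)) * hS

/-- For integers `m ≥ 2`, `k ≥ 0`, `ω = exp(2π√−1/m)` and `k̄ = k mod m` the least
nonnegative residue of `k` modulo `m`,
`∑_{i=1}^{m−1} ω^{i(k+1)}/(1 − ω^i)² = −(m² − 1)/12 + k̄(m − k̄)/2`. -/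
theorem sum_root_pow_div_one_sub_root_sq (m k : ℕ) (hm : 2 ≤ m)
    (ω : ℂ) (hω : ω = Complex.exp (2 * Real.pi * Complex.I / m)) :
    ∑ i ∈ Finset.Icc 1 (m - 1), ω ^ (i * (k + 1)) / (1 - ω ^ i) ^ 2 =
      -(((m : ℂ) ^ 2 - 1) / 12) + ((k % m : ℕ) : ℂ) * ((m : ℂ) - ((k % m : ℕ) : ℂ)) / 2 := by
  have hm0 : (m : ℂ) ≠ 0 := Nat.cast_ne_zero.2 (by omega)
  have hprim : IsPrimitiveRoot ω m := by
    rw [hω]; exact Complex.isPrimitiveRoot_exp m (by omega)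
  have hK : k % m < m := Nat.mod_lt _ (by omega)
  set r : ℕ := m - 1 - k % m with hr
  have hrc : (r : ℂ) = (m : ℂ) - 1 - ((k % m : ℕ) : ℂ) := by
    rw [hr]
    have h1 : k % m ≤ m - 1 := by omega
    rw [Nat.cast_sub h1, Nat.cast_sub (by omega : 1 ≤ m)]
    norm_num
  -- divisibility characterization
  have hdvdk : ∀ j < m, ∀ l < m,
      (m ∣ (k + 1 + j + l) ↔ l = (if j ≤ r then r - j else m + r - j)) := by
    intro j hj l hl
    have hd1 : m ∣ k - k % m := Nat.dvd_sub_mod k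
    have hle : k % m ≤ k := Nat.mod_le k m
    have h2 : k + 1 + j + l = (k - k % m) + (k % m + 1 + j + l) := by omega
    rw [h2, Nat.dvd_add_right hd1]
    exact aux_dvd_iff m (k % m) j l r hK hr hj hl
  have hl0lt : ∀ j, j < m → (if j ≤ r then r - j else m + r - j) < m := by
    intro j hj; split <;> omega
  -- per-term rewriting
  have hterm : ∀ i ∈ Icc 1 (m - 1),
      ω ^ (i * (k + 1)) / (1 - ω ^ i) ^ 2
        = (∑ j ∈ range m, ∑ l ∈ range m, (j : ℂ) * (l : ℂ) * (ω ^ i) ^ (k + 1 + j + l))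
            / (m : ℂ) ^ 2 := by
    intro i hi
    simp only [mem_Icc] at hi
    have h1 : (ω ^ i) ^ m = 1 := by
      rw [← pow_mul, mul_comm, pow_mul, hprim.pow_eq_one, one_pow]
    have h2 : ω ^ i ≠ 1 := hprim.pow_ne_one_of_pos_of_lt (by omega) (by omega)
    rw [pow_mul]
    exact aux_term m k hm (ω ^ i) h1 h2
  -- inner sums
  have hinner : ∀ j ∈ range m,
      ∑ i ∈ Icc 1 (m - 1), ∑ l ∈ range m, (j : ℂ) * (l : ℂ) * (ω ^ i) ^ (k + 1 + j + l)
        = (m : ℂ) * ((j : ℂ) * (((if j ≤ r then r - j else m + r - j) : ℕ) : ℂ))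
            - (j : ℂ) * ∑ l ∈ range m, (l : ℂ) := by
    intro j hj
    rw [sum_comm]
    have h1 : ∀ l ∈ range m,
        ∑ i ∈ Icc 1 (m - 1), (j : ℂ) * (l : ℂ) * (ω ^ i) ^ (k + 1 + j + l)
          = (j : ℂ) * (l : ℂ) * ((if m ∣ (k + 1 + j + l) then (m : ℂ) else 0) - 1) := by
      intro l hl
      rw [← mul_sum, aux_G m hm ω hprim]
    rw [sum_congr rfl h1]
    have h2 : ∀ l ∈ range m,
        (j : ℂ) * (l : ℂ) * ((if m ∣ (k + 1 + j + l) then (m : ℂ) else 0) - 1)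
          = (j : ℂ) * (l : ℂ) * (if m ∣ (k + 1 + j + l) then (m : ℂ) else 0)
              - (j : ℂ) * (l : ℂ) := by
      intro l hl; ring
    rw [sum_congr rfl h2, sum_sub_distrib]
    have hmem : (if j ≤ r then r - j else m + r - j) ∈ range m :=
      mem_range.2 (hl0lt j (mem_range.1 hj))
    have h3 : ∑ l ∈ range m,
        (j : ℂ) * (l : ℂ) * (if m ∣ (k + 1 + j + l) then (m : ℂ) else 0)
          = (j : ℂ) * (((if j ≤ r then r - j else m + r - j) : ℕ) : ℂ) * (m : ℂ) := by
      rw [Finset.sum_eq_single (if j ≤ r then r - j else m + r - j)]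
      · rw [if_pos ((hdvdk j (mem_range.1 hj) _ (mem_range.1 hmem)).2 rfl)]
      · intro b hb hbne
        rw [if_neg (fun hd => hbne ((hdvdk j (mem_range.1 hj) b (mem_range.1 hb)).1 hd)),
          mul_zero]
      · intro h; exact absurd hmem h
    rw [h3, ← mul_sum]
    ring
  -- closed form for the main sum B
  have hcast : ∀ j ∈ range m,
      (j : ℂ) * (((if j ≤ r then r - j else m + r - j) : ℕ) : ℂ)
        = (j : ℂ) * ((r : ℂ) - (j : ℂ)) + (if j ≤ r then 0 else (m : ℂ) * (j : ℂ)) := by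
    intro j hj
    by_cases h : j ≤ r
    · rw [if_pos h, if_pos h, Nat.cast_sub h]; ring
    · rw [if_neg h, if_neg h]
      have hj' : j ≤ m + r := by
        have := mem_range.1 hj; omega
      rw [Nat.cast_sub hj', Nat.cast_add]
      ring
  have hr1 : r + 1 ≤ m := by omega
  have hsplit := Finset.sum_range_add_sum_Ico
    (fun j => if j ≤ r then (0 : ℂ) else (m : ℂ) * (j : ℂ)) hr1
  have hz : ∑ j ∈ range (r + 1), (if j ≤ r then (0 : ℂ) else (m : ℂ) * (j : ℂ)) = 0 := by
    refine Finset.sum_eq_zero fun j hj => ?_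
    rw [if_pos (by have := mem_range.1 hj; omega)]
  have hIco : ∑ j ∈ Ico (r + 1) m, (if j ≤ r then (0 : ℂ) else (m : ℂ) * (j : ℂ))
      = (m : ℂ) * (∑ j ∈ range m, (j : ℂ) - ∑ j ∈ range (r + 1), (j : ℂ)) := by
    have h4 : ∀ j ∈ Ico (r + 1) m,
        (if j ≤ r then (0 : ℂ) else (m : ℂ) * (j : ℂ)) = (m : ℂ) * (j : ℂ) := by
      intro j hj
      rw [if_neg (by have := (mem_Ico.1 hj).1; omega)]
    rw [sum_congr rfl h4, ← mul_sum]
    have h5 := Finset.sum_range_add_sum_Ico (fun j => (j : ℂ)) hr1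
    rw [show ∑ j ∈ Ico (r + 1) m, (j : ℂ)
        = ∑ j ∈ range m, (j : ℂ) - ∑ j ∈ range (r + 1), (j : ℂ) by
      linear_combination h5]
  have hB : ∑ j ∈ range m,
      (j : ℂ) * (((if j ≤ r then r - j else m + r - j) : ℕ) : ℂ)
        = (r : ℂ) * ((m : ℂ) * ((m : ℂ) - 1) / 2)
            - (m : ℂ) * ((m : ℂ) - 1) * (2 * (m : ℂ) - 1) / 6
          + (m : ℂ) * ((m : ℂ) * ((m : ℂ) - 1) / 2
            - ((r : ℂ) + 1) * (((r : ℂ) + 1) - 1) / 2) := by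
    rw [sum_congr rfl hcast, sum_add_distrib, sumc3, ← hsplit, hz, hIco, sumc1, sumc1]
    push_cast
    ring
  -- assemble
  rw [sum_congr rfl hterm, ← sum_div, sum_comm, sum_congr rfl hinner, sum_sub_distrib,
    ← mul_sum, ← sum_mul, hB, sumc1, hrc, div_eq_iff (pow_ne_zero 2 hm0)]
  ring
end

section
/- Let z₀ ∈ ℂ with Im z₀ > 0, let u(z) = (z − z₀)/(z − conj(z₀)), let λ ∈ ℂ with |λ| = 1 and λ ≠ 1, and define the Möbius transformation T(z) = (z₀ − conj(z₀)·λ·u(z))/(1 − λ·u(z)) (so that u(T(z)) = λ·u(z)). Then for every integer k ≥ 0 and every z ∈ ℂ with Im z > 0 and z ≠ z₀: (z − conj(z))^{2k} · T′(z)^{k+1} / ((z − T(z))² · (conj(z) − T(z))^{2k}) = (λ^{k+1}/((1 − λ)² · u(z)²)) · ((1 − |u(z)|²)^{2k}/(1 − λ·|u(z)|²)^{2k}) · u′(z)², where T′ and u′ denote complex derivatives, u′(z) = (z₀ − conj(z₀))/(z − conj(z₀))², and all the denominators appearing are nonzero. -/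
/-!
Everything is computed in the disc coordinate `w = u z`. From `z - z₀ = w (z - z̄₀)` and its
conjugate one gets `z - T z = (z - z̄₀) w (1 - l) / (1 - l w)`,
`z̄ - T z = (z̄ - z₀) (1 - l |w|²) / (1 - l w)` and
`z - z̄ = -(1 - |w|²) (z - z̄₀) (z̄ - z₀) / (z₀ - z̄₀)`,
while `T` is the Möbius map `v ↦ (z₀ - z̄₀ v) / (1 - v)` composed with `l u`, so by the chain rule
`T′ z = l (z₀ - z̄₀)² / ((1 - l w)² (z - z̄₀)²)`. The kernel is `X ^ k * Y` with
`X = (z - z̄)² T′ z / (z̄ - T z)² = l (1 - |w|²)² / (1 - l |w|²)²` and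
`Y = T′ z / (z - T z)² = l u′(z)² / ((1 - l)² w²)`. All denominators are nonzero because `|w| < 1`
on the upper half-plane and `|l| = 1`.
-/

open Complex ComplexConjugate

noncomputable def cayley (z₀ w : ℂ) : ℂ := (w - z₀) / (w - conj z₀)

noncomputable def ellipticMobius (z₀ l w : ℂ) : ℂ :=
  (z₀ - conj z₀ * (l * cayley z₀ w)) / (1 - l * cayley z₀ w)

theorem one_sub_mul_ne_zero_of_norm_eq_one {R : Type*} [NormedDivisionRing R] {l x : R}
    (hl : ‖l‖ = 1) (hx : ‖x‖ < 1) : 1 - l * x ≠ 0 :=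
  sub_ne_zero.2 fun h => hx.ne (by simpa [hl] using (congrArg norm h).symm)

theorem hasDerivAt_moebius {𝕜 : Type*} [NontriviallyNormedField 𝕜] (a b c d z : 𝕜)
    (h : c * z + d ≠ 0) :
    HasDerivAt (fun w => (a * w + b) / (c * w + d)) ((a * d - b * c) / (c * z + d) ^ 2) z := by
  refine ((((hasDerivAt_id' z).const_mul a).add_const b).div
    (((hasDerivAt_id' z).const_mul c).add_const d) h).congr_deriv ?_
  ring

theorem pow_two_mul_mul_pow_succ_div {K : Type*} [Field K] (k : ℕ) (a d e f : K) :
    a ^ (2 * k) * d ^ (k + 1) / (e ^ 2 * f ^ (2 * k)) = (a ^ 2 * d / f ^ 2) ^ k * (d / e ^ 2) := by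
  ring

section

variable {z z₀ l : ℂ}

theorem sub_conj_ne_zero (hz : 0 < z.im) (hz₀ : 0 < z₀.im) : z - conj z₀ ≠ 0 := by
  intro h
  have := congrArg im h
  simp only [sub_im, conj_im, sub_neg_eq_add, zero_im] at this
  linarith

theorem norm_sub_lt_norm_sub_conj (hz : 0 < z.im) (hz₀ : 0 < z₀.im) :
    ‖z - z₀‖ < ‖z - conj z₀‖ := by
  rw [← sq_lt_sq₀ (norm_nonneg _) (norm_nonneg _), ← normSq_eq_norm_sq, ← normSq_eq_norm_sq]
  simp only [normSq_apply, sub_re, sub_im, conj_re, conj_im]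
  nlinarith

theorem norm_cayley_lt_one (hz : 0 < z.im) (hz₀ : 0 < z₀.im) : ‖cayley z₀ z‖ < 1 := by
  rw [cayley, norm_div, div_lt_one (norm_pos_iff.2 (sub_conj_ne_zero hz hz₀))]
  exact norm_sub_lt_norm_sub_conj hz hz₀

theorem sub_eq_cayley_mul (h : z - conj z₀ ≠ 0) : z - z₀ = cayley z₀ z * (z - conj z₀) := by
  rw [cayley, div_mul_cancel₀ _ h]

theorem conj_sub_conj_eq_conj_cayley_mul (h : z - conj z₀ ≠ 0) :
    conj z - conj z₀ = conj (cayley z₀ z) * (conj z - z₀) := by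
  simpa using congrArg conj (sub_eq_cayley_mul h)

theorem sub_ellipticMobius (h : z - conj z₀ ≠ 0) (hm : 1 - l * cayley z₀ z ≠ 0) :
    z - ellipticMobius z₀ l z =
      (z - conj z₀) * cayley z₀ z * (1 - l) / (1 - l * cayley z₀ z) := by
  rw [ellipticMobius, eq_div_iff hm, sub_mul, div_mul_cancel₀ _ hm]
  linear_combination sub_eq_cayley_mul h

theorem conj_sub_ellipticMobius (h : z - conj z₀ ≠ 0) (hm : 1 - l * cayley z₀ z ≠ 0) :
    conj z - ellipticMobius z₀ l z =
      (conj z - z₀) * (1 - l * (‖cayley z₀ z‖ : ℂ) ^ 2) / (1 - l * cayley z₀ z) := by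
  rw [← mul_conj', ellipticMobius, eq_div_iff hm, sub_mul, div_mul_cancel₀ _ hm]
  linear_combination (-(l * cayley z₀ z)) * conj_sub_conj_eq_conj_cayley_mul h

theorem sub_conj_eq (h : z - conj z₀ ≠ 0) (hd : z₀ - conj z₀ ≠ 0) :
    z - conj z =
      -((1 - (‖cayley z₀ z‖ : ℂ) ^ 2) * (z - conj z₀) * (conj z - z₀)) / (z₀ - conj z₀) := by
  rw [← mul_conj', eq_div_iff hd]
  linear_combination (conj z - conj z₀) * sub_eq_cayley_mul h +
    cayley z₀ z * (z - conj z₀) * conj_sub_conj_eq_conj_cayley_mul h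

theorem hasDerivAt_cayley (h : z - conj z₀ ≠ 0) :
    HasDerivAt (cayley z₀) ((z₀ - conj z₀) / (z - conj z₀) ^ 2) z := by
  have hfun : cayley z₀ = fun w => (1 * w + -z₀) / (1 * w + -conj z₀) := by
    funext w
    simp only [cayley, one_mul, ← sub_eq_add_neg]
  rw [hfun]
  refine (hasDerivAt_moebius _ _ _ _ z ?_).congr_deriv ?_
  · rwa [one_mul, ← sub_eq_add_neg]
  · ring

theorem hasDerivAt_ellipticMobius (h : z - conj z₀ ≠ 0)
    (hm : 1 - l * cayley z₀ z ≠ 0) :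
    HasDerivAt (ellipticMobius z₀ l)
      (l * (z₀ - conj z₀) ^ 2 / ((1 - l * cayley z₀ z) ^ 2 * (z - conj z₀) ^ 2)) z := by
  have hfun : ellipticMobius z₀ l =
      (fun v => (-conj z₀ * v + z₀) / (-1 * v + 1)) ∘ (fun w => l * cayley z₀ w) := by
    funext w
    simp only [ellipticMobius, Function.comp_apply]
    ring
  have hM := hasDerivAt_moebius (-conj z₀) z₀ (-1) 1 (l * cayley z₀ z)
    (by rwa [neg_one_mul, neg_add_eq_sub])
  rw [hfun]
  refine (hM.comp z ((hasDerivAt_cayley h).const_mul l)).congr_deriv ?_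
  rw [neg_one_mul, neg_add_eq_sub]
  field_simp
  ring

theorem deriv_ellipticMobius_div_sq_sub (h : z - conj z₀ ≠ 0) (hm : 1 - l * cayley z₀ z ≠ 0) :
    deriv (ellipticMobius z₀ l) z / (z - ellipticMobius z₀ l z) ^ 2 =
      l / ((1 - l) ^ 2 * cayley z₀ z ^ 2) * ((z₀ - conj z₀) / (z - conj z₀) ^ 2) ^ 2 := by
  rw [(hasDerivAt_ellipticMobius h hm).deriv, sub_ellipticMobius h hm]
  field_simp

theorem sq_sub_conj_mul_deriv_ellipticMobius_div_sq (h : z - conj z₀ ≠ 0)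
    (hb : conj z - z₀ ≠ 0) (hd : z₀ - conj z₀ ≠ 0) (hm : 1 - l * cayley z₀ z ≠ 0) :
    (z - conj z) ^ 2 * deriv (ellipticMobius z₀ l) z / (conj z - ellipticMobius z₀ l z) ^ 2 =
      l * (1 - (‖cayley z₀ z‖ : ℂ) ^ 2) ^ 2 / (1 - l * (‖cayley z₀ z‖ : ℂ) ^ 2) ^ 2 := by
  rw [sub_conj_eq h hd, (hasDerivAt_ellipticMobius h hm).deriv, conj_sub_ellipticMobius h hm]
  field_simp

end

/-- Let `z₀` be in the upper half-plane, `u(z) = (z − z₀)/(z − conj z₀)`, `l` a unimodular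
complex number with `l ≠ 1`, and `T(z) = (z₀ − conj(z₀)·l·u(z))/(1 − l·u(z))` the elliptic
Möbius transformation with `u(T(z)) = l·u(z)`. Then for every integer `k ≥ 0` and every `z`
in the upper half-plane with `z ≠ z₀`, all denominators below are nonzero and
`(z − conj z)^{2k}·T′(z)^{k+1}/((z − T(z))²·(conj z − T(z))^{2k})
 = (l^{k+1}/((1 − l)²·u(z)²))·((1 − |u(z)|²)^{2k}/(1 − l·|u(z)|²)^{2k})·u′(z)²`,
where `u′(z) = (z₀ − conj z₀)/(z − conj z₀)²`. -/
theorem elliptic_term_disc_coordinate (z₀ : ℂ) (hz₀ : 0 < z₀.im)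
    (l : ℂ) (hl : ‖l‖ = 1) (hl1 : l ≠ 1) (k : ℕ) (z : ℂ) (hz : 0 < z.im)
    (hzz₀ : z ≠ z₀)
    (u T : ℂ → ℂ)
    (hu : u = fun w : ℂ => (w - z₀) / (w - (starRingEnd ℂ) z₀))
    (hT : T = fun w : ℂ => (z₀ - (starRingEnd ℂ) z₀ * (l * u w)) / (1 - l * u w)) :
    z - (starRingEnd ℂ) z₀ ≠ 0 ∧
    1 - l * u z ≠ 0 ∧
    u z ≠ 0 ∧
    z - T z ≠ 0 ∧
    (starRingEnd ℂ) z - T z ≠ 0 ∧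
    1 - l * ((‖u z‖ : ℂ)) ^ 2 ≠ 0 ∧
    (z - (starRingEnd ℂ) z) ^ (2 * k) * (deriv T z) ^ (k + 1) /
        ((z - T z) ^ 2 * ((starRingEnd ℂ) z - T z) ^ (2 * k)) =
      l ^ (k + 1) / ((1 - l) ^ 2 * (u z) ^ 2) *
        ((1 - ((‖u z‖ : ℂ)) ^ 2) ^ (2 * k) /
          (1 - l * ((‖u z‖ : ℂ)) ^ 2) ^ (2 * k)) *
        ((z₀ - (starRingEnd ℂ) z₀) / (z - (starRingEnd ℂ) z₀) ^ 2) ^ 2 := by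
  obtain rfl : u = cayley z₀ := hu
  obtain rfl : T = ellipticMobius z₀ l := hT
  have ha : z - conj z₀ ≠ 0 := sub_conj_ne_zero hz hz₀
  have hb : conj z - z₀ ≠ 0 := by simpa using (map_ne_zero conj).2 ha
  have hd : z₀ - conj z₀ ≠ 0 := sub_conj_ne_zero hz₀ hz₀
  have hw : ‖cayley z₀ z‖ < 1 := norm_cayley_lt_one hz hz₀
  have hw₀ : cayley z₀ z ≠ 0 := div_ne_zero (sub_ne_zero.2 hzz₀) ha
  have hm : 1 - l * cayley z₀ z ≠ 0 := one_sub_mul_ne_zero_of_norm_eq_one hl hw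
  have hN : 1 - l * (‖cayley z₀ z‖ : ℂ) ^ 2 ≠ 0 := one_sub_mul_ne_zero_of_norm_eq_one hl
    (by simpa using pow_lt_one₀ (norm_nonneg _) hw two_ne_zero)
  have hl₁ : 1 - l ≠ 0 := sub_ne_zero.2 hl1.symm
  refine ⟨ha, hm, hw₀, ?_, ?_, hN, ?_⟩
  · rw [sub_ellipticMobius ha hm]
    exact div_ne_zero (mul_ne_zero (mul_ne_zero ha hw₀) hl₁) hm
  · rw [conj_sub_ellipticMobius ha hm]
    exact div_ne_zero (mul_ne_zero hb hN) hm
  · rw [pow_two_mul_mul_pow_succ_div, sq_sub_conj_mul_deriv_ellipticMobius_div_sq ha hb hd hm,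
      deriv_ellipticMobius_div_sq_sub ha hm]
    -- `ring` expands sums under `⁻¹`; it identifies `(q ^ 2)⁻¹ ^ k` with `(q ^ (2 * k))⁻¹`
    -- only for atoms `q`
    generalize 1 - (‖cayley z₀ z‖ : ℂ) ^ 2 = p
    generalize 1 - l * (‖cayley z₀ z‖ : ℂ) ^ 2 = q
    ring
end

section
/- Let m ≥ 2 and k ≥ 0 be integers, ω = exp(2π√−1/m), and let k̄ ∈ {0, 1, …, m−1} be the least nonnegative residue of k modulo m. Then ∑_{i=1}^{m−1} ω^{i(k+1)}/(1 − ω^i)² = −(m²/2)·(B₂(k̄/m) − 1/(6m²)), where B₂(x) = x² − x + 1/6 is the second Bernoulli polynomial. -/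
open Complex Finset

/-- The second Bernoulli polynomial `B₂(x) = x² − x + 1/6` (over `ℂ`). -/
noncomputable def bernoulliTwoC (x : ℂ) : ℂ := x ^ 2 - x + 1 / 6

/-! Write `S_e(n) = ∑_{i=1}^{m-1} ζ^{in} / (1 - ζ^i)^e` (`rootSum ζ m e n`). Because
`z^n/(1-z)^(e+1) - z^(n+1)/(1-z)^(e+1) = z^n/(1-z)^e`, the first difference in `n` of `S_{e+1}`
is `S_e`. Now `S_0(n) = -1` for `m ∤ n`, and pairing `i` with `m - i` gives `S_1(1) = (1 - m)/2`,
so `S_1(n) = n - (m + 1)/2` for `1 ≤ n ≤ m` and `S_2(r + 1) = S_2(1) - r(r - m)/2` for `r < m`.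
The constant `S_2(1) = -(m² - 1)/12` is forced by `∑_{n<m} S_2(n + 1) = 0`, since the character
sums `∑_{n<m} ζ^{in}` vanish; and `S_2` is `m`-periodic in `n`. -/

noncomputable def rootSum {K : Type*} [Field K] (ζ : K) (m e n : ℕ) : K :=
  ∑ i ∈ Icc 1 (m - 1), ζ ^ (i * n) / (1 - ζ ^ i) ^ e

section Field

variable {K : Type*} [Field K]

theorem div_one_sub_add_div_one_sub {z w : K} (hzw : z * w = 1) (hz : 1 - z ≠ 0)
    (hw : 1 - w ≠ 0) : z / (1 - z) + w / (1 - w) = -1 := by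
  field_simp
  linear_combination -hzw

theorem pow_div_sub_pow_succ_div {z : K} (hz : 1 - z ≠ 0) (n e : ℕ) :
    z ^ n / (1 - z) ^ (e + 1) - z ^ (n + 1) / (1 - z) ^ (e + 1) = z ^ n / (1 - z) ^ e := by
  field_simp
  ring

variable {ζ : K} {m : ℕ}

theorem IsPrimitiveRoot.one_sub_pow_ne_zero (hζ : IsPrimitiveRoot ζ m) {i : ℕ}
    (hi : i ∈ Icc 1 (m - 1)) : 1 - ζ ^ i ≠ 0 := by
  rw [mem_Icc] at hi
  exact sub_ne_zero.2 (hζ.pow_ne_one_of_pos_of_lt (by omega) (by omega)).symm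

theorem IsPrimitiveRoot.geom_sum_pow_eq_zero (hζ : IsPrimitiveRoot ζ m) {j : ℕ}
    (hj : ¬ m ∣ j) : ∑ i ∈ range m, (ζ ^ j) ^ i = 0 := by
  have hne : ζ ^ j ≠ 1 := mt (hζ.pow_eq_one_iff_dvd j).1 hj
  rw [geom_sum_eq hne, ← pow_mul, mul_comm, pow_mul, hζ.pow_eq_one, one_pow, sub_self, zero_div]

theorem rootSum_add_mul (hζ : IsPrimitiveRoot ζ m) (e n q : ℕ) :
    rootSum ζ m e (n + m * q) = rootSum ζ m e n := by
  refine sum_congr rfl fun i _ => ?_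
  rw [mul_add, pow_add, mul_left_comm, pow_mul ζ m, hζ.pow_eq_one, one_pow, mul_one]

theorem rootSum_sub_succ (hζ : IsPrimitiveRoot ζ m) (e n : ℕ) :
    rootSum ζ m (e + 1) n - rootSum ζ m (e + 1) (n + 1) = rootSum ζ m e n := by
  simp only [rootSum, ← sum_sub_distrib]
  refine sum_congr rfl fun i hi => ?_
  rw [pow_mul, pow_mul]
  exact pow_div_sub_pow_succ_div (hζ.one_sub_pow_ne_zero hi) n e

theorem sum_range_rootSum_add (hζ : IsPrimitiveRoot ζ m) (e c : ℕ) :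
    ∑ n ∈ range m, rootSum ζ m e (n + c) = 0 := by
  simp only [rootSum]
  rw [sum_comm]
  refine sum_eq_zero fun i hi => ?_
  rw [mem_Icc] at hi
  have hi' : ¬ m ∣ i := Nat.not_dvd_of_pos_of_lt (by omega) (by omega)
  simp only [mul_add, pow_add, pow_mul, mul_div_assoc, ← sum_mul, hζ.geom_sum_pow_eq_zero hi',
    zero_mul]

theorem rootSum_zero_of_not_dvd (hζ : IsPrimitiveRoot ζ m) (hm : 0 < m) {n : ℕ}
    (hn : ¬ m ∣ n) : rootSum ζ m 0 n = -1 := by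
  have hgeom := hζ.geom_sum_pow_eq_zero hn
  rw [sum_range_eq_add_Ico _ hm, ← Icc_sub_one_right_eq_Ico_of_not_isMin (by simpa using hm.ne'),
    pow_zero] at hgeom
  simp only [rootSum, pow_zero, div_one, pow_mul']
  linear_combination hgeom

theorem two_mul_rootSum_one_one (hζ : IsPrimitiveRoot ζ m) (hm : 0 < m) :
    2 * rootSum ζ m 1 1 = 1 - m := by
  have hmem : ∀ i ∈ Icc 1 (m - 1), m - i ∈ Icc 1 (m - 1) := by
    intro i hi
    simp only [mem_Icc] at hi ⊢
    omega
  have hinv : ∀ i ∈ Icc 1 (m - 1), m - (m - i) = i := by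
    intro i hi
    simp only [mem_Icc] at hi
    omega
  have hpair : ∀ i ∈ Icc 1 (m - 1),
      ζ ^ i / (1 - ζ ^ i) + ζ ^ (m - i) / (1 - ζ ^ (m - i)) = -1 := by
    intro i hi
    have hζi : ζ ^ i * ζ ^ (m - i) = 1 := by
      rw [← pow_add, Nat.add_sub_cancel' (by simp only [mem_Icc] at hi; omega), hζ.pow_eq_one]
    exact div_one_sub_add_div_one_sub hζi (hζ.one_sub_pow_ne_zero hi)
      (hζ.one_sub_pow_ne_zero (hmem i hi))
  have hreflect : ∑ i ∈ Icc 1 (m - 1), ζ ^ (m - i) / (1 - ζ ^ (m - i)) =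
      ∑ i ∈ Icc 1 (m - 1), ζ ^ i / (1 - ζ ^ i) :=
    sum_nbij' (m - ·) (m - ·) hmem hmem hinv hinv fun _ _ => rfl
  calc 2 * rootSum ζ m 1 1
      = ∑ i ∈ Icc 1 (m - 1), (ζ ^ i / (1 - ζ ^ i) + ζ ^ (m - i) / (1 - ζ ^ (m - i))) := by
        simp only [rootSum, mul_one, pow_one, sum_add_distrib, hreflect]; ring
    _ = 1 - m := by
        rw [sum_congr rfl hpair]
        simp [Nat.cast_sub hm]

end Field

section CharZero

variable {K : Type*} [Field K] [CharZero K] {ζ : K} {m : ℕ}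

theorem sum_range_mul_sub (a : K) (n : ℕ) :
    ∑ r ∈ range n, (r : K) * (r - a) = n * (n - 1) * (2 * n - 1) / 6 - a * n * (n - 1) / 2 := by
  induction n with
  | zero => simp
  | succ n ih => rw [sum_range_succ, ih]; push_cast; ring

theorem rootSum_one (hζ : IsPrimitiveRoot ζ m) (hm : 0 < m) {n : ℕ} (hn : 1 ≤ n)
    (hnm : n ≤ m) :
    rootSum ζ m 1 n = n - (m + 1) / 2 := by
  induction n, hn using Nat.le_induction with
  | base => linear_combination two_mul_rootSum_one_one hζ hm / 2
  | succ n hn ih =>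
    have hstep := rootSum_sub_succ hζ 0 n
    rw [rootSum_zero_of_not_dvd hζ hm (Nat.not_dvd_of_pos_of_lt hn (by omega)),
      ih (by omega)] at hstep
    push_cast
    linear_combination -hstep

theorem rootSum_two_succ (hζ : IsPrimitiveRoot ζ m) (hm : 0 < m) {r : ℕ} (hr : r < m) :
    rootSum ζ m 2 (r + 1) = rootSum ζ m 2 1 - r * (r - m) / 2 := by
  induction r with
  | zero => simp
  | succ r ih =>
    have hstep := rootSum_sub_succ hζ 1 (r + 1)
    rw [ih (by omega), rootSum_one hζ hm (by omega) (by omega)] at hstep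
    push_cast at hstep ⊢
    linear_combination -hstep

theorem rootSum_two_one (hζ : IsPrimitiveRoot ζ m) (hm : 0 < m) :
    rootSum ζ m 2 1 = -(m ^ 2 - 1) / 12 := by
  have hsum := sum_range_rootSum_add hζ 2 1
  rw [sum_congr rfl fun r hr => rootSum_two_succ hζ hm (mem_range.1 hr), sum_sub_distrib,
    sum_const, card_range, nsmul_eq_mul, ← sum_div, sum_range_mul_sub] at hsum
  apply mul_left_cancel₀ (Nat.cast_ne_zero.2 hm.ne' : (m : K) ≠ 0)
  linear_combination hsum

theorem rootSum_two (hζ : IsPrimitiveRoot ζ m) (hm : 0 < m) (k : ℕ) :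
    rootSum ζ m 2 (k + 1) =
      -((k % m : ℕ) : K) ^ 2 / 2 + m * (k % m : ℕ) / 2 - (m ^ 2 - 1) / 12 := by
  have hk : k + 1 = k % m + 1 + m * (k / m) := by rw [add_right_comm, Nat.mod_add_div]
  rw [hk, rootSum_add_mul hζ, rootSum_two_succ hζ hm (Nat.mod_lt k hm), rootSum_two_one hζ hm]
  ring

end CharZero

/-- For integers `m ≥ 2`, `k ≥ 0`, `ω = exp(2π√−1/m)` and `k̄ = k mod m`,
`∑_{i=1}^{m−1} ω^{i(k+1)}/(1 − ω^i)² = −(m²/2)·(B₂(k̄/m) − 1/(6m²))`, where `B₂` is the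
second Bernoulli polynomial (`k̄/m` being the fractional part `{k/m}`). -/
theorem sum_root_pow_eq_bernoulli (m k : ℕ) (hm : 2 ≤ m)
    (ω : ℂ) (hω : ω = Complex.exp (2 * Real.pi * Complex.I / m)) :
    ∑ i ∈ Finset.Icc 1 (m - 1), ω ^ (i * (k + 1)) / (1 - ω ^ i) ^ 2 =
      -((m : ℂ) ^ 2 / 2) *
        (bernoulliTwoC (((k % m : ℕ) : ℂ) / (m : ℂ)) - 1 / (6 * (m : ℂ) ^ 2)) := by
  have hprim : IsPrimitiveRoot ω m := hω ▸ isPrimitiveRoot_exp m (by omega)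
  have hm' : (m : ℂ) ≠ 0 := Nat.cast_ne_zero.2 (by omega)
  change rootSum ω m 2 (k + 1) = _
  rw [rootSum_two hprim (by omega), bernoulliTwoC]
  field_simp
  ring
end
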